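/- Let n be a nonempty finite index type, M a symmetric positive-definite square real matrix of size n, S a square real matrix of size n, F : n → ℝ, and q̄ : n → ℝ with S *ᵥ q̄ = 0 and F ⬝ᵥ q̄ = 1. Assume that the quadratic form of S is strictly positive on the nonzero vectors of the discrete zero-mean subspace: for every w : n → ℝ with w ≠ 0 and F ⬝ᵥ w = 0, one has w ⬝ᵥ (S *ᵥ w) > 0. Let q : ℝ → (n → ℝ) be differentiable with M *ᵥ (q'(t)) + S *ᵥ (q(t)) = 0 and F ⬝ᵥ q(t) = 1 for all t. Then for every t with q(t) ≠ q̄, the derivative of the Lyapunov function l(t) := (1/2) · (q(t) - q̄) ⬝ᵥ (M *ᵥ (q(t) - q̄)) is strictly negative: l'(t) < 0. -/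

import Mathlib

/-! Along the flow `M q̇ = -S q` the derivative of `½ (q - q̄)ᵀ M (q - q̄)` is, by symmetry of `M`,
`(q - q̄)ᵀ M q̇ = -(q - q̄)ᵀ S q = -(q - q̄)ᵀ S (q - q̄)`, using `S q̄ = 0`. Mass preservation puts
`q - q̄` in the zero-mean subspace, where the quadratic form of `S` is positive definite. -/

open Matrix

section Calculus

variable {𝕜 : Type*} [NontriviallyNormedField 𝕜] {ι κ : Type*} [Fintype ι]
  {u v : 𝕜 → ι → 𝕜} {u' v' : ι → 𝕜} {t : 𝕜}

theorem HasDerivAt.dotProduct (hu : HasDerivAt u u' t) (hv : HasDerivAt v v' t) :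
    HasDerivAt (fun s => u s ⬝ᵥ v s) (u' ⬝ᵥ v t + u t ⬝ᵥ v') t := by
  simp only [_root_.dotProduct, ← Finset.sum_add_distrib]
  exact HasDerivAt.fun_sum fun i _ => (hasDerivAt_pi.mp hu i).mul (hasDerivAt_pi.mp hv i)

theorem HasDerivAt.matrix_mulVec [Fintype κ] (A : Matrix κ ι 𝕜) (hv : HasDerivAt v v' t) :
    HasDerivAt (fun s => A *ᵥ v s) (A *ᵥ v') t :=
  hasDerivAt_pi.mpr fun i => by
    simpa [mulVec] using (hasDerivAt_const t (A i)).dotProduct hv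

end Calculus

theorem Matrix.IsSymm.dotProduct_mulVec_comm {ι R : Type*} [Fintype ι] [CommSemiring R]
    {A : Matrix ι ι R} (hA : A.IsSymm) (v w : ι → R) :
    v ⬝ᵥ (A *ᵥ w) = w ⬝ᵥ (A *ᵥ v) := by
  rw [dotProduct_mulVec, ← mulVec_transpose, hA.eq, dotProduct_comm]

theorem Matrix.IsSymm.hasDerivAt_dotProduct_mulVec {𝕜 : Type*} [NontriviallyNormedField 𝕜]
    {ι : Type*} [Fintype ι] {A : Matrix ι ι 𝕜} (hA : A.IsSymm) {v : 𝕜 → ι → 𝕜} {v' : ι → 𝕜}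
    {t : 𝕜} (hv : HasDerivAt v v' t) :
    HasDerivAt (fun s => v s ⬝ᵥ (A *ᵥ v s)) (2 * (v' ⬝ᵥ (A *ᵥ v t))) t := by
  convert hv.dotProduct (hv.matrix_mulVec A) using 1
  rw [hA.dotProduct_mulVec_comm (v t), two_mul]

theorem lyapunov_strict_decay_general
    {n : Type*} [Fintype n]
    (M : Matrix n n ℝ) (hM : M.PosDef) (S : Matrix n n ℝ)
    (F : n → ℝ) (qbar : n → ℝ)
    (hqbar : S *ᵥ qbar = 0) (hmass : F ⬝ᵥ qbar = 1)
    (hpos : ∀ w : n → ℝ, w ≠ 0 → F ⬝ᵥ w = 0 → 0 < w ⬝ᵥ (S *ᵥ w))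
    (q q' : ℝ → (n → ℝ))
    (hq : ∀ t, HasDerivAt q (q' t) t)
    (hdyn : ∀ t, M *ᵥ q' t + S *ᵥ q t = 0)
    (hqmass : ∀ t, F ⬝ᵥ q t = 1) :
    ∀ t : ℝ, q t ≠ qbar →
      deriv (fun s => (1 / 2 : ℝ) * ((q s - qbar) ⬝ᵥ (M *ᵥ (q s - qbar)))) t < 0 := by
  intro t hne
  have hMsymm : M.IsSymm := isHermitian_iff_isSymm.mp hM.1
  set w := q t - qbar
  have hw : w ≠ 0 := sub_ne_zero.mpr hne
  have hwF : F ⬝ᵥ w = 0 := by rw [dotProduct_sub, hqmass t, hmass, sub_self]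
  have hMq' : M *ᵥ q' t = -(S *ᵥ w) := by
    rw [mulVec_sub, hqbar, sub_zero, eq_neg_iff_add_eq_zero, hdyn t]
  have hderiv :=
    (hMsymm.hasDerivAt_dotProduct_mulVec ((hq t).sub_const qbar)).const_mul (1 / 2 : ℝ)
  rw [hderiv.deriv, hMsymm.dotProduct_mulVec_comm, hMq', dotProduct_neg]
  linarith [hpos w hw hwF]

/-- Strict Lyapunov decay for the semi-discrete FEM dynamics: with `M` symmetric
positive-definite, `S *ᵥ q̄ = 0`, `F ⬝ᵥ q̄ = 1`, the quadratic form of `S` strictly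
positive on nonzero zero-mean vectors, and `q` a mass-preserving solution of
`M q̇ + S q = 0`, the Lyapunov function `l(t) = (1/2)(q(t)-q̄) ⬝ᵥ (M *ᵥ (q(t)-q̄))`
satisfies `l'(t) < 0` whenever `q(t) ≠ q̄`. -/
theorem lyapunov_strict_decay
    {n : Type*} [Fintype n] [DecidableEq n] [Nonempty n]
    (M : Matrix n n ℝ) (hM : M.PosDef) (S : Matrix n n ℝ)
    (F : n → ℝ) (qbar : n → ℝ)
    (hqbar : S *ᵥ qbar = 0) (hmass : F ⬝ᵥ qbar = 1)
    (hpos : ∀ w : n → ℝ, w ≠ 0 → F ⬝ᵥ w = 0 → 0 < w ⬝ᵥ (S *ᵥ w))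
    (q q' : ℝ → (n → ℝ))
    (hq : ∀ t, HasDerivAt q (q' t) t)
    (hdyn : ∀ t, M *ᵥ q' t + S *ᵥ q t = 0)
    (hqmass : ∀ t, F ⬝ᵥ q t = 1) :
    ∀ t : ℝ, q t ≠ qbar →
      deriv (fun s => (1 / 2 : ℝ) * ((q s - qbar) ⬝ᵥ (M *ᵥ (q s - qbar)))) t < 0 :=
  lyapunov_strict_decay_general M hM S F qbar hqbar hmass hpos q q' hq hdyn hqmass
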